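/- Let p be an odd prime, m, k positive integers with m/gcd(m,k) odd, α a non-square in F_{p^m}, σ an automorphism of F_{p^m}. Define f : F_{p^m} × F_{p^m} → F_{p^m} × F_{p^m} by f(x,y) = (x^(p^k+1) + α·σ(y^(p^k+1)), xy). Then f is a planar function: for every nonzero (a,b), the map (x,y) ↦ f(x+a, y+b) − f(x,y) is a bijection of F_{p^m} × F_{p^m}. -/

import Mathlib

/-!
Write `q = p ^ k` and `B_c(u) = c u^q + c^q u`, so that `(x + c)^(q+1) = x^(q+1) + B_c(x) + c^(q+1)`
and `B_c` is additive. Hence `f(z + (a, b)) - f(z)` is an additive map of `z` plus a constant,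
whose additive part sends `(U, V)` to `(B_a(U) + α σ(B_b(V)), bU + aV)`, and it suffices that
this has trivial kernel.

Since `m / gcd(m, k)` is odd, so is `(p^m - 1) / (p^gcd(m,k) - 1)`; hence `-1` is not a
`(q-1)`-th power in `F` and `B_c` has trivial kernel for `c ≠ 0`. This settles the case `b = 0`.
If `b ≠ 0`, put `c = a/b`; then `U = -cV` and the first coordinate becomes
`α σ(w) - c^(q+1) w` with `w = B_b(V)`. If `V ≠ 0` then `w ≠ 0`, and
`α = c^(q+1) · w σ(w) / σ(w)^2` would be a square: `q + 1` is even, and `w σ(w)` is a square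
because `σ` preserves quadratic residuosity.
-/

open Finset

lemma Nat.odd_geom_sum {a n : ℕ} (ha : Odd a) (hn : Odd n) : Odd (∑ i ∈ range n, a ^ i) := by
  rwa [odd_sum_iff_odd_card_odd, filter_true_of_mem fun i _ => ha.pow, card_range]

lemma exists_odd_mul_pow_sub_one_eq {p m k : ℕ} (hp : Odd p) (h : Odd (m / m.gcd k)) :
    ∃ r s : ℕ, Odd s ∧ (p ^ k - 1) * s = (p ^ m - 1) * r := by
  set d := m.gcd k
  obtain ⟨r, hr⟩ : p ^ d - 1 ∣ p ^ k - 1 := by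
    have := Nat.sub_dvd_pow_sub_pow (p ^ d) 1 (k / d)
    rwa [one_pow, ← pow_mul, Nat.mul_div_cancel' (Nat.gcd_dvd_right m k)] at this
  refine ⟨r, ∑ i ∈ range (m / d), (p ^ d) ^ i, Nat.odd_geom_sum hp.pow h, ?_⟩
  rw [hr, mul_right_comm, mul_comm (p ^ d - 1), geom_sum_mul_of_one_le (Nat.one_le_pow _ _ hp.pos),
    ← pow_mul, Nat.mul_div_cancel' (Nat.gcd_dvd_left m k)]

lemma FiniteField.ringChar_ne_two_of_card_eq {F : Type*} [Field F] [Fintype F] {p m : ℕ}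
    (hF : Fintype.card F = p ^ m) (hp : Odd p) : ringChar F ≠ 2 := by
  rw [Ne, FiniteField.even_card_iff_char_two, hF, Nat.odd_iff.mp hp.pow]
  decide

lemma FiniteField.pow_pow_sub_one_ne_neg_one {F : Type*} [Field F] [Fintype F] {p m k : ℕ}
    (hF : Fintype.card F = p ^ m) (hp : Odd p) (h : Odd (m / m.gcd k)) {t : F} (ht : t ≠ 0) :
    t ^ (p ^ k - 1) ≠ -1 := by
  intro hneg
  obtain ⟨r, s, hs, hrs⟩ := exists_odd_mul_pow_sub_one_eq hp h
  have : (-1 : F) ^ s = 1 := by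
    rw [← hneg, ← pow_mul, hrs, pow_mul, ← hF, FiniteField.pow_card_sub_one_eq_one t ht, one_pow]
  rw [hs.neg_one_pow] at this
  exact Ring.neg_one_ne_one_of_char_ne_two (ringChar_ne_two_of_card_eq hF hp) this

def frobeniusPolar {R : Type*} [CommRing R] (q : ℕ) (c x : R) : R := c * x ^ q + c ^ q * x

section ExpChar

variable {R : Type*} [CommRing R] {p : ℕ} [ExpChar R p] (n : ℕ)

lemma add_pow_expChar_pow_succ (x c : R) :
    (x + c) ^ (p ^ n + 1) = x ^ (p ^ n + 1) + frobeniusPolar (p ^ n) c x + c ^ (p ^ n + 1) := by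
  rw [pow_succ, add_pow_expChar_pow, frobeniusPolar]
  ring

lemma frobeniusPolar_sub (c x y : R) :
    frobeniusPolar (p ^ n) c (x - y) = frobeniusPolar (p ^ n) c x - frobeniusPolar (p ^ n) c y := by
  rw [frobeniusPolar, frobeniusPolar, frobeniusPolar, sub_pow_expChar_pow]
  ring

end ExpChar

lemma frobeniusPolar_mul_neg_mul {R : Type*} [CommRing R] {q : ℕ} (hq : Odd q) (c b v : R) :
    frobeniusPolar q (c * b) (-(c * v)) = -(c ^ (q + 1) * frobeniusPolar q b v) := by
  rw [frobeniusPolar, frobeniusPolar, hq.neg_pow]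
  ring

lemma FiniteField.frobeniusPolar_ne_zero {F : Type*} [Field F] [Fintype F] {p m k : ℕ}
    (hF : Fintype.card F = p ^ m) (hp : Odd p) (h : Odd (m / m.gcd k)) {c u : F} (hc : c ≠ 0)
    (hu : u ≠ 0) : frobeniusPolar (p ^ k) c u ≠ 0 := by
  obtain ⟨t, rfl⟩ : ∃ t, u = c * t := ⟨u / c, by field_simp⟩
  have ht : t ≠ 0 := right_ne_zero_of_mul hu
  obtain ⟨n, hn⟩ : ∃ n, p ^ k = n + 1 :=
    ⟨p ^ k - 1, (Nat.sub_add_cancel (Nat.one_le_pow _ _ hp.pos)).symm⟩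
  have hroot := FiniteField.pow_pow_sub_one_ne_neg_one hF hp h ht
  rw [hn, Nat.add_sub_cancel] at hroot
  have : frobeniusPolar (n + 1) c (c * t) = c ^ (n + 2) * t * (t ^ n + 1) := by
    rw [frobeniusPolar]
    ring
  rw [hn, this]
  exact mul_ne_zero (mul_ne_zero (pow_ne_zero _ hc) ht) fun h0 =>
    hroot (eq_neg_of_add_eq_zero_left h0)

lemma FiniteField.isSquare_mul_map {F G : Type*} [Field F] [Fintype F] [FunLike G F F]
    [RingHomClass G F F] (hF : ringChar F ≠ 2) (σ : G) (w : F) : IsSquare (w * σ w) := by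
  rcases eq_or_ne w 0 with rfl | hw
  · simp
  rw [FiniteField.isSquare_iff hF (mul_ne_zero hw ((map_ne_zero σ).mpr hw)), mul_pow, ← map_pow]
  rcases FiniteField.pow_dichotomy hF hw with h | h <;> simp [h]

lemma FiniteField.isSquare_of_mul_map_eq {F G : Type*} [Field F] [Fintype F] [FunLike G F F]
    [RingHomClass G F F] (hF : ringChar F ≠ 2) (σ : G) {α c w : F} {n : ℕ} (hn : Even n)
    (hw : w ≠ 0) (h : α * σ w = c ^ n * w) : IsSquare α := by
  have hσw : σ w ≠ 0 := (map_ne_zero σ).mpr hw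
  have : α = c ^ n * (w * σ w) * ((σ w)⁻¹ * (σ w)⁻¹) := by
    field_simp
    linear_combination h
  rw [this]
  exact ((hn.isSquare_pow c).mul (isSquare_mul_map hF σ w)).mul ⟨_, rfl⟩

lemma FiniteField.eq_zero_of_frobeniusPolar_eq_zero {F G : Type*} [Field F] [Fintype F]
    [FunLike G F F] [RingHomClass G F F] {p m k : ℕ} (hF : Fintype.card F = p ^ m) (hp : Odd p)
    (h : Odd (m / m.gcd k)) {α : F} (hα : ¬ IsSquare α) (σ : G) {a b U V : F} (hab : (a, b) ≠ 0)
    (h₁ : frobeniusPolar (p ^ k) a U + α * σ (frobeniusPolar (p ^ k) b V) = 0)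
    (h₂ : b * U + a * V = 0) : U = 0 ∧ V = 0 := by
  have hB {c u : F} : c ≠ 0 → u ≠ 0 → frobeniusPolar (p ^ k) c u ≠ 0 :=
    frobeniusPolar_ne_zero hF hp h
  rcases eq_or_ne b 0 with rfl | hb
  · have ha : a ≠ 0 := fun ha => hab (by simp [ha])
    obtain rfl : V = 0 := by simpa [ha] using h₂
    refine ⟨by_contra fun hU => hB ha hU ?_, rfl⟩
    simpa [frobeniusPolar] using h₁
  · obtain ⟨c, rfl⟩ : ∃ c, a = c * b := ⟨a / b, by field_simp⟩
    have hU : U = -(c * V) := mul_left_cancel₀ hb (by linear_combination h₂)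
    have hV : V = 0 := by
      by_contra hV
      refine hα (isSquare_of_mul_map_eq (ringChar_ne_two_of_card_eq hF hp) σ (c := c)
        (hp.pow (n := k)).add_one (hB hb hV) ?_)
      rw [hU, frobeniusPolar_mul_neg_mul hp.pow] at h₁
      linear_combination h₁
    exact ⟨by simp [hU, hV], hV⟩

def zhouPottMap {R G : Type*} [CommRing R] [FunLike G R R] (q : ℕ) (α : R) (σ : G)
    (z : R × R) : R × R :=
  (z.1 ^ (q + 1) + α * σ (z.2 ^ (q + 1)), z.1 * z.2)

lemma zhouPottMap_sub_sub {R G : Type*} [CommRing R] {p : ℕ} [ExpChar R p] [FunLike G R R]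
    [RingHomClass G R R] (n : ℕ) (α : R) (σ : G) (z z' a : R × R) :
    (zhouPottMap (p ^ n) α σ (z + a) - zhouPottMap (p ^ n) α σ z) -
        (zhouPottMap (p ^ n) α σ (z' + a) - zhouPottMap (p ^ n) α σ z') =
      (frobeniusPolar (p ^ n) a.1 (z.1 - z'.1) + α * σ (frobeniusPolar (p ^ n) a.2 (z.2 - z'.2)),
        a.2 * (z.1 - z'.1) + a.1 * (z.2 - z'.2)) := by
  ext
  · simp only [zhouPottMap, Prod.fst_sub, Prod.fst_add, Prod.snd_add, add_pow_expChar_pow_succ,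
      frobeniusPolar_sub, map_add, map_sub]
    ring
  · simp only [zhouPottMap, Prod.snd_sub, Prod.fst_add, Prod.snd_add]
    ring

theorem stmt_6_general (p m k : ℕ) (hp : p.Prime) (hodd : Odd p)
    (h : Odd (m / Nat.gcd m k))
    (F : Type*) [Field F] [Fintype F] (hF : Fintype.card F = p ^ m)
    (α : F) (hα : ¬ IsSquare α) (σ : F ≃+* F)
    (f : F × F → F × F)
    (hf : ∀ x y : F, f (x, y) = (x ^ (p ^ k + 1) + α * σ (y ^ (p ^ k + 1)), x * y)) :
    ∀ ab : F × F, ab ≠ 0 →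
      Function.Bijective (fun xy : F × F => f (xy + ab) - f xy) := by
  have := Fact.mk hp
  have : CharP F p := charP_of_card_eq_prime_pow hF
  have hf' : f = zhouPottMap (p ^ k) α σ := funext fun z => hf z.1 z.2
  rintro ⟨a, b⟩ hab
  rw [← Finite.injective_iff_bijective]
  intro z z' (hzz' : f (z + (a, b)) - f z = f (z' + (a, b)) - f z')
  have hdiff := zhouPottMap_sub_sub (p := p) k α σ z z' (a, b)
  rw [← hf', hzz', sub_self, eq_comm, Prod.mk_eq_zero] at hdiff
  obtain ⟨hU, hV⟩ :=
    FiniteField.eq_zero_of_frobeniusPolar_eq_zero hF hodd h hα σ hab hdiff.1 hdiff.2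
  exact Prod.ext (sub_eq_zero.mp hU) (sub_eq_zero.mp hV)

theorem stmt_6 (p m k : ℕ) (hp : p.Prime) (hodd : Odd p)
    (hm : 0 < m) (hk : 0 < k) (h : Odd (m / Nat.gcd m k))
    (F : Type*) [Field F] [Fintype F] (hF : Fintype.card F = p ^ m)
    (α : F) (hα : ¬ IsSquare α) (σ : F ≃+* F)
    (f : F × F → F × F)
    (hf : ∀ x y : F, f (x, y) = (x ^ (p ^ k + 1) + α * σ (y ^ (p ^ k + 1)), x * y)) :
    ∀ ab : F × F, ab ≠ 0 →
      Function.Bijective (fun xy : F × F => f (xy + ab) - f xy) :=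
  stmt_6_general p m k hp hodd h F hF α hα σ f hf
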